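/- arXiv:1512.02558 — 10 statements merged into one kernel-verified Lean document; each statement's English description precedes it below -/
import Mathlib

section
/- Let Φ₁, Φ₂ be strictly plurisubharmonic quadratic weights on ℂ with associated quantities a = α₂/α₁ and b = |β₂−β₁|/α₁. Then there exists a constant C ≥ 0 such that ‖u‖_{Φ₂} ≤ C·‖u‖_{Φ₁} for every entire function u : ℂ → ℂ if and only if a − b ≥ 1 (equivalently, if and only if Φ₁(z) ≤ Φ₂(z) for all z ∈ ℂ). -/
/-!
The Gaussians `u_c z = exp (c z²)` decide everything: `‖u_c‖_Φ < ∞` for the weight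
`Φ z = α|z|² + Re (β z²)` iff `|c - β| < α`, because after the rotation `z ↦ w z` with `γ w² = |γ|`
the integral of `exp (-α|z|² + Re (γ z²))` splits into one-dimensional Gaussians with exponents
`α ∓ |γ|`. A bounded embedding therefore maps the disc `B(β₁, α₁)` of admissible `c` into
`B(β₂, α₂)`, which forces `α₁ + |β₂ - β₁| ≤ α₂`; this is exactly `Φ₁ ≤ Φ₂`, and then `C = 1` works.
-/

open MeasureTheory

noncomputable def wnorm (Φ : ℂ → ℝ) (f : ℂ → ℂ) : ENNReal :=
  (∫⁻ z : ℂ, ENNReal.ofReal (‖f z‖ ^ 2 * Real.exp (-2 * Φ z))) ^ (1 / 2 : ℝ)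

open Complex Metric

theorem Metric.ball_subset_ball_iff {E : Type*} [NormedAddCommGroup E] [NormedSpace ℝ E]
    [Nontrivial E] {x y : E} {r s : ℝ} (hr : 0 < r) :
    ball x r ⊆ ball y s ↔ r + dist x y ≤ s := by
  refine ⟨fun h => ?_, ball_subset_ball'⟩
  obtain ⟨e, he, hxy⟩ : ∃ e : E, ‖e‖ = 1 ∧ x - y = ‖x - y‖ • e := by
    by_cases hv : x - y = 0
    · obtain ⟨e, he⟩ := exists_norm_eq E zero_le_one
      exact ⟨e, he, by simp [hv]⟩
    · refine ⟨‖x - y‖⁻¹ • (x - y), norm_smul_inv_norm (𝕜 := ℝ) hv, ?_⟩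
      rw [smul_inv_smul₀ (norm_ne_zero_iff.2 hv)]
  by_contra! hlt
  set t := max 0 (s - dist x y)
  have hc : x + t • e ∈ ball x r := by
    rw [mem_ball_iff_norm, add_sub_cancel_left, norm_smul, he, mul_one,
      Real.norm_of_nonneg (le_max_left _ _)]
    exact max_lt hr (by linarith)
  have hcy : dist (x + t • e) y = dist x y + t := by
    rw [dist_eq_norm, add_sub_right_comm, hxy, ← add_smul, norm_smul, he, mul_one, ← dist_eq_norm,
      Real.norm_of_nonneg (add_nonneg dist_nonneg (le_max_left _ _))]
  have hcs := mem_ball.1 (h hc)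
  rw [hcy] at hcs
  linarith [le_max_right 0 (s - dist x y)]

theorem Complex.exists_norm_eq_one_mul_sq_eq_norm (γ : ℂ) :
    ∃ w : ℂ, ‖w‖ = 1 ∧ γ * w ^ 2 = ‖γ‖ := by
  refine ⟨exp (↑(-(arg γ / 2)) * I), norm_exp_ofReal_mul_I _, ?_⟩
  calc γ * exp (↑(-(arg γ / 2)) * I) ^ 2
      = (‖γ‖ : ℂ) * exp (arg γ * I) * exp (↑(-(arg γ / 2)) * I) ^ 2 := by
        rw [norm_mul_exp_arg_mul_I]
    _ = (‖γ‖ : ℂ) := by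
      rw [← exp_nat_mul, mul_assoc, ← exp_add]
      push_cast
      rw [show (arg γ : ℂ) * I + 2 * (-(arg γ / 2) * I) = 0 by ring, exp_zero, mul_one]

theorem lintegral_ofReal_exp_ne_zero {α : Type*} [MeasurableSpace α] {μ : Measure α} [NeZero μ]
    {f : α → ℝ} (hf : AEMeasurable f μ) :
    ∫⁻ x, ENNReal.ofReal (Real.exp (f x)) ∂μ ≠ 0 := by
  rw [Ne, lintegral_eq_zero_iff' (by fun_prop)]
  intro h
  obtain ⟨x, hx⟩ := h.exists
  simp only [Pi.zero_apply, ENNReal.ofReal_eq_zero] at hx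
  exact hx.not_gt (Real.exp_pos _)

theorem lintegral_ofReal_exp_neg_mul_sq_lt_top_iff {b : ℝ} :
    ∫⁻ x : ℝ, ENNReal.ofReal (Real.exp (-b * x ^ 2)) < ⊤ ↔ 0 < b := by
  rw [← integrable_exp_neg_mul_sq_iff, Integrable,
    hasFiniteIntegral_iff_ofReal (Filter.Eventually.of_forall fun _ => Real.exp_nonneg _)]
  exact (and_iff_right (by fun_prop)).symm

theorem lintegral_ofReal_exp_quadratic (α : ℝ) (γ : ℂ) :
    ∫⁻ z : ℂ, ENNReal.ofReal (Real.exp (-α * ‖z‖ ^ 2 + (γ * z ^ 2).re)) =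
      (∫⁻ x : ℝ, ENNReal.ofReal (Real.exp (-(α - ‖γ‖) * x ^ 2))) *
        ∫⁻ y : ℝ, ENNReal.ofReal (Real.exp (-(α + ‖γ‖) * y ^ 2)) := by
  obtain ⟨w, hw, hγw⟩ := exists_norm_eq_one_mul_sq_eq_norm γ
  let R := rotation ⟨w, mem_sphere_zero_iff_norm.2 hw⟩
  have hR : ∀ z, R z = w * z := fun _ => rfl
  rw [← R.measurePreserving.lintegral_comp_emb R.toHomeomorph.measurableEmbedding,
    ← lintegral_prod_mul (μ := volume) (ν := volume) (by fun_prop) (by fun_prop),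
    ← Measure.volume_eq_prod,
    ← volume_preserving_equiv_real_prod.lintegral_comp_emb
      measurableEquivRealProd.measurableEmbedding]
  congr 1 with z
  rw [← ENNReal.ofReal_mul (Real.exp_nonneg _), ← Real.exp_add, hR]
  have hsq : γ * (w * z) ^ 2 = ‖γ‖ * z ^ 2 := by rw [← hγw]; ring
  rw [hsq, norm_mul, hw, one_mul, re_ofReal_mul, Complex.sq_norm, normSq_apply, sq, mul_re,
    show measurableEquivRealProd z = (z.re, z.im) from rfl]
  ring_nf

theorem lintegral_ofReal_exp_quadratic_lt_top_iff {α : ℝ} {γ : ℂ} :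
    ∫⁻ z : ℂ, ENNReal.ofReal (Real.exp (-α * ‖z‖ ^ 2 + (γ * z ^ 2).re)) < ⊤ ↔ ‖γ‖ < α := by
  rw [lintegral_ofReal_exp_quadratic, ENNReal.mul_lt_top_iff,
    or_iff_left (not_or.2 ⟨lintegral_ofReal_exp_ne_zero (by fun_prop),
      lintegral_ofReal_exp_ne_zero (by fun_prop)⟩),
    lintegral_ofReal_exp_neg_mul_sq_lt_top_iff, lintegral_ofReal_exp_neg_mul_sq_lt_top_iff]
  constructor
  · rintro ⟨h, -⟩; linarith
  · intro h; constructor <;> linarith [norm_nonneg γ]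

noncomputable def quadWeight (α : ℝ) (β : ℂ) (z : ℂ) : ℝ := α * ‖z‖ ^ 2 + (β * z ^ 2).re

theorem quadWeight_le_quadWeight_iff {α₁ α₂ : ℝ} {β₁ β₂ : ℂ} :
    (∀ z, quadWeight α₁ β₁ z ≤ quadWeight α₂ β₂ z) ↔ α₁ + ‖β₂ - β₁‖ ≤ α₂ := by
  have hdiff : ∀ z, quadWeight α₂ β₂ z - quadWeight α₁ β₁ z =
      (α₂ - α₁) * ‖z‖ ^ 2 + ((β₂ - β₁) * z ^ 2).re := by
    intro z; simp only [quadWeight, sub_mul, sub_re]; ring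
  constructor
  · intro h
    obtain ⟨w, hw, hδw⟩ := exists_norm_eq_one_mul_sq_eq_norm (β₂ - β₁)
    have hwI : ‖w * I‖ = 1 := by rw [norm_mul, norm_I, hw, mul_one]
    have hsq : (β₂ - β₁) * (w * I) ^ 2 = -‖β₂ - β₁‖ := by
      rw [mul_pow, I_sq, ← mul_assoc, hδw, mul_neg_one]
    have hz := hdiff (w * I)
    rw [hwI, hsq, neg_re, ofReal_re] at hz
    linarith [h (w * I)]
  · intro h z
    have hre : -(‖β₂ - β₁‖ * ‖z‖ ^ 2) ≤ ((β₂ - β₁) * z ^ 2).re := by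
      rw [← norm_pow, ← norm_mul]
      exact neg_le_of_abs_le (abs_re_le_norm _)
    nlinarith [hdiff z, sq_nonneg ‖z‖]

theorem wnorm_le_wnorm_of_le {Φ₁ Φ₂ : ℂ → ℝ} (h : ∀ z, Φ₁ z ≤ Φ₂ z) (f : ℂ → ℂ) :
    wnorm Φ₂ f ≤ wnorm Φ₁ f := by
  refine ENNReal.rpow_le_rpow (lintegral_mono fun z => ENNReal.ofReal_le_ofReal ?_) (by norm_num)
  exact mul_le_mul_of_nonneg_left (Real.exp_le_exp.2 (by linarith [h z])) (sq_nonneg _)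

theorem wnorm_quadWeight_cexp_lt_top_iff (α : ℝ) (β c : ℂ) :
    wnorm (quadWeight α β) (fun z => cexp (c * z ^ 2)) < ⊤ ↔ ‖c - β‖ < α := by
  have hpt : ∀ z : ℂ, ‖cexp (c * z ^ 2)‖ ^ 2 * Real.exp (-2 * quadWeight α β z) =
      Real.exp (-(2 * α) * ‖z‖ ^ 2 + ((2 * (c - β)) * z ^ 2).re) := by
    intro z
    rw [norm_exp, ← Real.exp_nat_mul, ← Real.exp_add, quadWeight,
      show 2 * (c - β) * z ^ 2 = ((2 : ℝ) : ℂ) * (c * z ^ 2 - β * z ^ 2) by push_cast; ring,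
      re_ofReal_mul, sub_re]
    push_cast
    congr 1
    ring
  rw [wnorm, ENNReal.rpow_lt_top_iff_of_pos (by norm_num)]
  simp_rw [hpt]
  rw [lintegral_ofReal_exp_quadratic_lt_top_iff, norm_mul, RCLike.norm_ofNat]
  constructor <;> intro <;> linarith

theorem embedding_bounded_iff_general
    (α₁ α₂ : ℝ) (β₁ β₂ : ℂ) (hα₁ : 0 < α₁)
    (Φ₁ Φ₂ : ℂ → ℝ)
    (hΦ₁ : ∀ z : ℂ, Φ₁ z = α₁ * ‖z‖ ^ 2 + (β₁ * z ^ 2).re)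
    (hΦ₂ : ∀ z : ℂ, Φ₂ z = α₂ * ‖z‖ ^ 2 + (β₂ * z ^ 2).re)
    (a b : ℝ) (ha : a = α₂ / α₁) (hb : b = ‖β₂ - β₁‖ / α₁) :
    ((∃ C : ℝ, 0 ≤ C ∧ ∀ u : ℂ → ℂ, Differentiable ℂ u →
        wnorm Φ₂ u ≤ ENNReal.ofReal C * wnorm Φ₁ u) ↔ a - b ≥ 1)
    ∧ (a - b ≥ 1 ↔ ∀ z : ℂ, Φ₁ z ≤ Φ₂ z) := by
  obtain rfl : Φ₁ = quadWeight α₁ β₁ := funext hΦ₁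
  obtain rfl : Φ₂ = quadWeight α₂ β₂ := funext hΦ₂
  have hab : a - b ≥ 1 ↔ α₁ + ‖β₂ - β₁‖ ≤ α₂ := by
    rw [ha, hb, ge_iff_le, ← sub_div, le_div_iff₀ hα₁]
    constructor <;> intro <;> linarith
  rw [hab, quadWeight_le_quadWeight_iff]
  refine ⟨⟨?_, fun h => ⟨1, zero_le_one, fun u _ => ?_⟩⟩, Iff.rfl⟩
  · rintro ⟨C, -, hC⟩
    have hballs : ball β₁ α₁ ⊆ ball β₂ α₂ := fun c hc => by
      have hu : Differentiable ℂ fun z => cexp (c * z ^ 2) := by fun_prop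
      have h₁ := (wnorm_quadWeight_cexp_lt_top_iff α₁ β₁ c).2 (mem_ball_iff_norm.1 hc)
      exact mem_ball_iff_norm.2 ((wnorm_quadWeight_cexp_lt_top_iff α₂ β₂ c).1
        ((hC _ hu).trans_lt (ENNReal.mul_lt_top ENNReal.ofReal_lt_top h₁)))
    simpa [dist_eq_norm, norm_sub_rev] using (ball_subset_ball_iff hα₁).1 hballs
  · simpa using wnorm_le_wnorm_of_le (quadWeight_le_quadWeight_iff.2 h) u

/-- for strictly plurisubharmonic quadratic weights
`Φⱼ(z) = αⱼ|z|² + Re(βⱼ z²)`, with `a = α₂/α₁` and `b = |β₂-β₁|/α₁`, there is a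
constant `C ≥ 0` with `‖u‖_{Φ₂} ≤ C ‖u‖_{Φ₁}` for every entire `u` iff `a - b ≥ 1`,
equivalently iff `Φ₁ ≤ Φ₂` pointwise. -/
theorem embedding_bounded_iff
    (α₁ α₂ : ℝ) (β₁ β₂ : ℂ) (hα₁ : 0 < α₁) (hα₂ : 0 < α₂)
    (Φ₁ Φ₂ : ℂ → ℝ)
    (hΦ₁ : ∀ z : ℂ, Φ₁ z = α₁ * ‖z‖ ^ 2 + (β₁ * z ^ 2).re)
    (hΦ₂ : ∀ z : ℂ, Φ₂ z = α₂ * ‖z‖ ^ 2 + (β₂ * z ^ 2).re)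
    (a b : ℝ) (ha : a = α₂ / α₁) (hb : b = ‖β₂ - β₁‖ / α₁) :
    ((∃ C : ℝ, 0 ≤ C ∧ ∀ u : ℂ → ℂ, Differentiable ℂ u →
        wnorm Φ₂ u ≤ ENNReal.ofReal C * wnorm Φ₁ u) ↔ a - b ≥ 1)
    ∧ (a - b ≥ 1 ↔ ∀ z : ℂ, Φ₁ z ≤ Φ₂ z) :=
  embedding_bounded_iff_general α₁ α₂ β₁ β₂ hα₁ Φ₁ Φ₂ hΦ₁ hΦ₂ a b ha hb
end

section
/- Let Φ₁, Φ₂ be strictly plurisubharmonic quadratic weights on ℂ with associated quantities a = α₂/α₁ and b = |β₂−β₁|/α₁. If b = 0 and a ≥ 1, then the embedding norm N(Φ₁,Φ₂) = sup{‖u‖_{Φ₂}/‖u‖_{Φ₁} : u entire, 0 < ‖u‖_{Φ₁} < ∞} equals a^{−1/2}. -/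
open MeasureTheory

/-- The norm of the embedding `H_{Φ₁} ↪ H_{Φ₂}`: the supremum of `‖u‖_{Φ₂}/‖u‖_{Φ₁}`
over entire `u` with `0 < ‖u‖_{Φ₁} < ∞`, valued in `[0,∞]`. -/
noncomputable def embNorm (Φ₁ Φ₂ : ℂ → ℝ) : ENNReal :=
  ⨆ u ∈ {u : ℂ → ℂ | Differentiable ℂ u ∧ 0 < wnorm Φ₁ u ∧ wnorm Φ₁ u < ⊤},
    wnorm Φ₂ u / wnorm Φ₁ u

/-! Multiplication by `exp (-β z²)` is an isometry from the space with weight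
`α ‖z‖² + Re (β z²)` onto the one with weight `α ‖z‖²`, so for `b = 0` only the Gaussian weights
`α ‖z‖²` and `a α ‖z‖²` matter. The substitution `z ↦ a^(-1/2) z` turns `‖u‖_{aα}` into
`a^(-1/2) ‖u (a^(-1/2) ·)‖_α`, and shrinking the argument of an entire function can only decrease
a radial weighted norm: in polar coordinates this is the monotonicity in `r` of the circle means of
`‖u‖²`, which for Taylor polynomials is Parseval's identity `∑ ‖cᵢ‖² r^(2i)`. Constants attain
the bound. -/

open Real Set Filter Topology Polynomial

theorem Polynomial.circleAverage_norm_sq_eval (p : ℂ[X]) (r : ℝ) :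
    circleAverage (fun z => ‖p.eval z‖ ^ 2) 0 r =
      ∑ i ∈ p.support, ‖p.coeff i‖ ^ 2 * r ^ (2 * i) := by
  have hcomp : ∀ z : ℂ, p.eval (r * z + 0) = (p.comp (C (r : ℂ) * X)).eval z := by simp
  rw [circleAverage_eq_circleAverage_zero_one]
  simp_rw [hcomp, ← sum_sq_norm_coeff_eq_circleAverage, comp_C_mul_X_coeff]
  refine Finset.sum_subset (fun i hi => ?_) (fun i _ hi => ?_) |>.trans
    (Finset.sum_congr rfl fun i _ => ?_)
  · rw [mem_support_iff, comp_C_mul_X_coeff] at hi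
    exact mem_support_iff.2 (left_ne_zero_of_mul hi)
  · rw [notMem_support_iff, comp_C_mul_X_coeff] at hi
    simp [hi]
  · rw [norm_mul, mul_pow, norm_pow, Complex.norm_real, norm_eq_abs, ← pow_mul, mul_comm i,
      pow_mul, sq_abs, ← pow_mul]

theorem TendstoUniformlyOn.tendsto_circleAverage {ι E : Type*} [NormedAddCommGroup E]
    [NormedSpace ℝ E] [CompleteSpace E] {l : Filter ι} [l.IsCountablyGenerated]
    {F : ι → ℂ → E} {f : ℂ → E} {c : ℂ} {R : ℝ}
    (hF : ∀ᶠ i in l, ContinuousOn (F i) (Metric.sphere c |R|))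
    (h : TendstoUniformlyOn F f l (Metric.sphere c |R|)) :
    Tendsto (fun i => circleAverage (F i) c R) l (𝓝 (circleAverage f c R)) := by
  simp only [circleAverage_def]
  refine .const_smul (TendstoUniformlyOn.tendsto_intervalIntegral_of_continuousOn ?_ ?_) _
  · exact hF.mono fun i hi =>
      hi.comp (continuous_circleMap c R).continuousOn fun θ _ => circleMap_mem_sphere' c R θ
  · exact (h.comp (circleMap c R)).mono fun θ _ => circleMap_mem_sphere' c R θ

theorem Differentiable.exists_polynomial_tendstoLocallyUniformly {v : ℂ → ℂ}
    (hv : Differentiable ℂ v) :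
    ∃ P : ℕ → ℂ[X], TendstoLocallyUniformly (fun n z => (P n).eval z) v atTop := by
  obtain ⟨p, hp⟩ : ∃ p, HasFPowerSeriesOnBall v p 0 ⊤ := ⟨_, hv.hasFPowerSeriesOnBall 0 one_pos⟩
  refine ⟨fun n => ∑ i ∈ Finset.range n, monomial i (p.coeff i), ?_⟩
  have h := hp.tendstoLocallyUniformlyOn
  rw [Metric.eball_top, tendstoLocallyUniformlyOn_univ] at h
  convert h using 2 with n z
  · simp [FormalMultilinearSeries.partialSum, eval_finsetSum, mul_comm]
  · simp

theorem Differentiable.monotoneOn_circleAverage_norm_sq {v : ℂ → ℂ} (hv : Differentiable ℂ v) :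
    MonotoneOn (fun r => circleAverage (fun z => ‖v z‖ ^ 2) 0 r) (Ici 0) := by
  obtain ⟨P, hP⟩ := hv.exists_polynomial_tendstoLocallyUniformly
  have hlim : ∀ r : ℝ, Tendsto (fun n => circleAverage (fun z => ‖(P n).eval z‖ ^ 2) 0 r) atTop
      (𝓝 (circleAverage (fun z => ‖v z‖ ^ 2) 0 r)) := by
    intro r
    have hC : Tendsto (fun n => (⟨fun z => (P n).eval z, (P n).continuous⟩ : C(ℂ, ℂ))) atTop
        (𝓝 ⟨v, hv.continuous⟩) := ContinuousMap.tendsto_iff_tendstoLocallyUniformly.2 hP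
    have hsq := ((ContinuousMap.continuous_postcomp
      (⟨fun w : ℂ => ‖w‖ ^ 2, by fun_prop⟩ : C(ℂ, ℝ))).tendsto _).comp hC
    refine TendstoUniformlyOn.tendsto_circleAverage (.of_forall fun n => by fun_prop) ?_
    exact ContinuousMap.tendsto_iff_forall_isCompact_tendstoUniformlyOn.1 hsq _
      (isCompact_sphere 0 |r|)
  intro s hs r _ hsr
  refine le_of_tendsto_of_tendsto' (hlim s) (hlim r) fun n => ?_
  simp only [Polynomial.circleAverage_norm_sq_eval]
  gcongr

theorem lintegral_Ioo_circleMap_eq_circleAverage {g : ℂ → ℝ} (hg : Continuous g)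
    (hg0 : ∀ z, 0 ≤ g z) (c : ℂ) (r : ℝ) :
    ∫⁻ θ in Ioo (-π) π, ENNReal.ofReal (g (circleMap c r θ)) =
      ENNReal.ofReal (2 * π * circleAverage g c r) := by
  have hshift : ∫ θ in (0 : ℝ)..2 * π, g (circleMap c r (θ + -π)) =
      ∫ θ in (-π)..π, g (circleMap c r θ) := by
    rw [intervalIntegral.integral_comp_add_right (fun θ => g (circleMap c r θ))]
    ring_nf
  rw [circleAverage_eq_integral_add (-π), smul_eq_mul, ← mul_assoc,
    mul_inv_cancel₀ (by positivity), one_mul, hshift,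
    intervalIntegral.integral_of_le (by linarith [pi_pos]), integral_Ioc_eq_integral_Ioo,
    ofReal_integral_eq_lintegral_ofReal]
  · exact ((hg.comp (continuous_circleMap c r)).integrableOn_Icc (μ := volume)).mono_set
      Ioo_subset_Icc_self
  · exact .of_forall fun θ => hg0 _

theorem Complex.lintegral_eq_lintegral_Ioi_circleMap (f : ℂ → ENNReal) (hf : Measurable f) :
    ∫⁻ z, f z = ∫⁻ r in Ioi 0, ENNReal.ofReal r * ∫⁻ θ in Ioo (-π) π, f (circleMap 0 r θ) := by
  have hpolar : ∀ p : ℝ × ℝ, Complex.polarCoord.symm p = circleMap 0 p.1 p.2 := fun p => by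
    simp [circleMap, Complex.exp_mul_I]
  rw [← Complex.lintegral_comp_polarCoord_symm, polarCoord_target, Measure.volume_eq_prod,
    ← Measure.prod_restrict, lintegral_prod]
  · refine lintegral_congr fun r => ?_
    simp_rw [hpolar, smul_eq_mul]
    exact lintegral_const_mul _ (hf.comp (by fun_prop))
  · rw [Measure.prod_restrict]
    refine Measurable.aemeasurable ?_
    simp_rw [hpolar, smul_eq_mul]
    fun_prop

theorem Differentiable.wnorm_comp_mul_le {v : ℂ → ℂ} (hv : Differentiable ℂ v) {φ : ℝ → ℝ}
    (hφ : Measurable φ) {t : ℝ} (ht₀ : 0 ≤ t) (ht₁ : t ≤ 1) :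
    wnorm (fun z => φ ‖z‖) (fun z => v (t * z)) ≤ wnorm (fun z => φ ‖z‖) v := by
  have hvc := hv.continuous
  have hmean := lintegral_Ioo_circleMap_eq_circleAverage (g := fun z => ‖v z‖ ^ 2)
    (by fun_prop) (fun _ => by positivity) 0
  have hpolar : ∀ s : ℝ, ∫⁻ z, ENNReal.ofReal (‖v (s * z)‖ ^ 2 * Real.exp (-2 * φ ‖z‖)) =
      ∫⁻ r in Ioi 0, ENNReal.ofReal r *
        (ENNReal.ofReal (2 * π * circleAverage (fun z => ‖v z‖ ^ 2) 0 (s * r)) *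
          ENNReal.ofReal (Real.exp (-2 * φ r))) := fun s => by
    rw [Complex.lintegral_eq_lintegral_Ioi_circleMap _ (by fun_prop)]
    refine setLIntegral_congr_fun measurableSet_Ioi fun r (hr : 0 < r) => ?_
    simp_rw [norm_circleMap_zero, abs_of_pos hr, ENNReal.ofReal_mul (sq_nonneg _)]
    rw [lintegral_mul_const' _ _ ENNReal.ofReal_ne_top, ← hmean]
    simp only [circleMap, zero_add, Complex.ofReal_mul, mul_assoc]
  have hpolar_one := hpolar 1
  simp only [Complex.ofReal_one, one_mul] at hpolar_one
  refine ENNReal.rpow_le_rpow ?_ (by norm_num)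
  rw [hpolar t, hpolar_one]
  refine setLIntegral_mono' measurableSet_Ioi fun r (hr : 0 < r) => ?_
  gcongr
  exact hv.monotoneOn_circleAverage_norm_sq (mul_nonneg ht₀ hr.le) hr.le
    (mul_le_of_le_one_left hr.le ht₁)

theorem lintegral_comp_smul {E : Type*} [NormedAddCommGroup E] [NormedSpace ℝ E]
    [FiniteDimensional ℝ E] [MeasurableSpace E] [BorelSpace E] (μ : Measure E)
    [μ.IsAddHaarMeasure] (f : E → ENNReal) {t : ℝ} (ht : t ≠ 0) :
    ∫⁻ x, f (t • x) ∂μ = ENNReal.ofReal |(t ^ Module.finrank ℝ E)⁻¹| * ∫⁻ x, f x ∂μ := by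
  rw [← smul_eq_mul, ← lintegral_smul_measure, ← Measure.map_addHaar_smul μ ht]
  exact (lintegral_map_equiv f (MeasurableEquiv.smul₀ t ht)).symm

theorem wnorm_eq_ofReal_mul_wnorm_comp_mul (Φ : ℂ → ℝ) (f : ℂ → ℂ) {t : ℝ} (ht : 0 < t) :
    wnorm Φ f = ENNReal.ofReal t * wnorm (fun z => Φ (t * z)) (fun z => f (t * z)) := by
  have hscale := lintegral_comp_smul volume
    (fun z => ENNReal.ofReal (‖f z‖ ^ 2 * Real.exp (-2 * Φ z))) ht.ne'
  simp only [Complex.real_smul, Complex.finrank_real_complex] at hscale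
  rw [abs_of_pos (by positivity)] at hscale
  have ht_sqrt : t * ((t ^ 2)⁻¹) ^ (1 / 2 : ℝ) = 1 := by
    rw [Real.inv_rpow (by positivity), ← Real.sqrt_eq_rpow, Real.sqrt_sq ht.le,
      mul_inv_cancel₀ ht.ne']
  rw [wnorm, wnorm, hscale, ENNReal.mul_rpow_of_nonneg _ _ (by norm_num),
    ENNReal.ofReal_rpow_of_nonneg (by positivity) (by norm_num), ← mul_assoc,
    ← ENNReal.ofReal_mul ht.le, ht_sqrt, ENNReal.ofReal_one, one_mul]

theorem wnorm_add_re_mul_sq (Φ : ℂ → ℝ) (β : ℂ) (u : ℂ → ℂ) :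
    wnorm (fun z => Φ z + (β * z ^ 2).re) u =
      wnorm Φ (fun z => u z * Complex.exp (-(β * z ^ 2))) := by
  unfold wnorm
  congr 2 with z
  rw [norm_mul, Complex.norm_exp, mul_pow, ← Real.exp_nat_mul, mul_assoc, ← Real.exp_add,
    Complex.neg_re]
  ring_nf

theorem embNorm_add_re_mul_sq (Φ₁ Φ₂ : ℂ → ℝ) (β : ℂ) :
    embNorm (fun z => Φ₁ z + (β * z ^ 2).re) (fun z => Φ₂ z + (β * z ^ 2).re) =
      embNorm Φ₁ Φ₂ := by
  have hE : Differentiable ℂ fun z : ℂ => Complex.exp (β * z ^ 2) := by fun_prop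
  have hE' : Differentiable ℂ fun z : ℂ => Complex.exp (-(β * z ^ 2)) := by fun_prop
  have hcancel : ∀ (v : ℂ → ℂ),
      (fun z => v z * Complex.exp (β * z ^ 2) * Complex.exp (-(β * z ^ 2))) = v := fun v => by
    ext z; rw [mul_assoc, ← Complex.exp_add, add_neg_cancel, Complex.exp_zero, mul_one]
  unfold embNorm
  simp only [wnorm_add_re_mul_sq]
  apply le_antisymm
  · refine iSup₂_le fun u ⟨hu, hpos, hfin⟩ => ?_
    exact le_iSup₂_of_le (fun z => u z * Complex.exp (-(β * z ^ 2))) ⟨hu.mul hE', hpos, hfin⟩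
      le_rfl
  · refine iSup₂_le fun v hv => ?_
    refine le_iSup₂_of_le (fun z => v z * Complex.exp (β * z ^ 2))
      ⟨hv.1.mul hE, by simpa only [hcancel] using hv.2⟩ ?_
    simp only [hcancel, le_rfl]

theorem lintegral_exp_neg_mul_norm_sq {α : ℝ} (hα : 0 < α) :
    ∫⁻ z : ℂ, ENNReal.ofReal (Real.exp (-α * ‖z‖ ^ 2)) = ENNReal.ofReal (π / α) := by
  rw [← ofReal_integral_eq_lintegral_ofReal, GaussianFourier.integral_rexp_neg_mul_sq_norm hα,
    Complex.finrank_real_complex]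
  · norm_num
  · refine .of_integral_ne_zero ?_
    rw [GaussianFourier.integral_rexp_neg_mul_sq_norm hα]
    positivity
  · exact .of_forall fun z => (Real.exp_pos _).le

theorem embNorm_gaussian {α a : ℝ} (hα : 0 < α) (ha : 1 ≤ a) :
    embNorm (fun z => α * ‖z‖ ^ 2) (fun z => a * α * ‖z‖ ^ 2) =
      ENNReal.ofReal (a ^ (-(1 / 2) : ℝ)) := by
  set t := a ^ (-(1 / 2) : ℝ)
  have ht : 0 < t := by positivity
  have ht₁ : t ≤ 1 := Real.rpow_le_one_of_one_le_of_nonpos ha (by norm_num)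
  have ht_sq : t ^ 2 = a⁻¹ := by
    rw [← Real.rpow_natCast, ← Real.rpow_mul (by positivity)]
    norm_num [Real.rpow_neg_one]
  have hscale : ∀ u, wnorm (fun z => a * α * ‖z‖ ^ 2) u =
      ENNReal.ofReal t * wnorm (fun z => α * ‖z‖ ^ 2) (fun z => u (t * z)) := fun u => by
    rw [wnorm_eq_ofReal_mul_wnorm_comp_mul _ _ ht]
    congr 3 with z
    rw [norm_mul, Complex.norm_real, norm_of_nonneg ht.le, mul_pow, ht_sq]
    field_simp
  have hone : wnorm (fun z => α * ‖z‖ ^ 2) 1 = ENNReal.ofReal (π / (2 * α)) ^ (1 / 2 : ℝ) := by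
    rw [wnorm, ← lintegral_exp_neg_mul_norm_sq (by positivity)]
    congr 2 with z
    simp [mul_assoc]
  unfold embNorm
  apply le_antisymm
  · refine iSup₂_le fun u hu => ENNReal.div_le_of_le_mul ?_
    rw [hscale]
    gcongr
    exact hu.1.wnorm_comp_mul_le (φ := fun r => α * r ^ 2) (by fun_prop) ht.le ht₁
  · have hpos : 0 < wnorm (fun z => α * ‖z‖ ^ 2) 1 := by rw [hone]; positivity
    have hfin : wnorm (fun z => α * ‖z‖ ^ 2) 1 < ⊤ := by
      rw [hone]; exact ENNReal.rpow_lt_top_of_nonneg (by norm_num) ENNReal.ofReal_ne_top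
    refine le_iSup₂_of_le 1 ⟨differentiable_const 1, hpos, hfin⟩ (le_of_eq ?_)
    rw [hscale]
    exact (ENNReal.mul_div_cancel_right hpos.ne' hfin.ne).symm

theorem embNorm_eq_of_b_eq_zero_general
    (α₁ α₂ : ℝ) (β₁ β₂ : ℂ) (hα₁ : 0 < α₁)
    (Φ₁ Φ₂ : ℂ → ℝ)
    (hΦ₁ : ∀ z : ℂ, Φ₁ z = α₁ * ‖z‖ ^ 2 + (β₁ * z ^ 2).re)
    (hΦ₂ : ∀ z : ℂ, Φ₂ z = α₂ * ‖z‖ ^ 2 + (β₂ * z ^ 2).re)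
    (a b : ℝ) (ha : a = α₂ / α₁) (hb : b = ‖β₂ - β₁‖ / α₁)
    (hb0 : b = 0) (ha1 : 1 ≤ a) :
    embNorm Φ₁ Φ₂ = ENNReal.ofReal (a ^ (-(1 / 2) : ℝ)) := by
  have hβ : β₂ = β₁ := by
    rw [hb0, eq_comm, div_eq_zero_iff, norm_eq_zero, sub_eq_zero] at hb
    exact hb.resolve_right hα₁.ne'
  have hα₂ : α₂ = a * α₁ := by rw [ha, div_mul_cancel₀ _ hα₁.ne']
  obtain rfl : Φ₁ = fun z => α₁ * ‖z‖ ^ 2 + (β₁ * z ^ 2).re := funext hΦ₁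
  obtain rfl : Φ₂ = fun z => a * α₁ * ‖z‖ ^ 2 + (β₁ * z ^ 2).re := by
    ext z; rw [hΦ₂, hβ, hα₂]
  rw [embNorm_add_re_mul_sq (fun z => α₁ * ‖z‖ ^ 2) (fun z => a * α₁ * ‖z‖ ^ 2),
    embNorm_gaussian hα₁ ha1]

/-- if `b = 0` and `a ≥ 1` then the embedding norm equals `a^{-1/2}`. -/
theorem embNorm_eq_of_b_eq_zero
    (α₁ α₂ : ℝ) (β₁ β₂ : ℂ) (hα₁ : 0 < α₁) (hα₂ : 0 < α₂)
    (Φ₁ Φ₂ : ℂ → ℝ)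
    (hΦ₁ : ∀ z : ℂ, Φ₁ z = α₁ * ‖z‖ ^ 2 + (β₁ * z ^ 2).re)
    (hΦ₂ : ∀ z : ℂ, Φ₂ z = α₂ * ‖z‖ ^ 2 + (β₂ * z ^ 2).re)
    (a b : ℝ) (ha : a = α₂ / α₁) (hb : b = ‖β₂ - β₁‖ / α₁)
    (hb0 : b = 0) (ha1 : 1 ≤ a) :
    embNorm Φ₁ Φ₂ = ENNReal.ofReal (a ^ (-(1 / 2) : ℝ)) :=
  embNorm_eq_of_b_eq_zero_general α₁ α₂ β₁ β₂ hα₁ Φ₁ Φ₂ hΦ₁ hΦ₂ a b ha hb hb0 ha1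
end

section
/- Let Φ₁, Φ₂ be strictly plurisubharmonic quadratic weights on ℂ with associated quantities a = α₂/α₁ and b = |β₂−β₁|/α₁. Define the model weights Φ₀(z) = |z|²/2 and Φ̃(z) = (a|z|² − b·Re(z²))/2. Then the embedding norms coincide: sup{‖u‖_{Φ₂}/‖u‖_{Φ₁} : u entire, 0 < ‖u‖_{Φ₁} < ∞} = sup{‖u‖_{Φ̃}/‖u‖_{Φ₀} : u entire, 0 < ‖u‖_{Φ₀} < ∞} (as elements of [0,∞]). -/
open MeasureTheory

/-!
If `Ψ(z) = Φ(cz) + Re g(z)` with `g` entire, then `u ↦ u(c ·) e^{g}` is a bijection of entire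
functions with `‖u(c ·) e^{g}‖_Ψ = |c|⁻¹ ‖u‖_Φ` (the substitution `z ↦ cz` has Jacobian `|c|²`).
Applied to both weights at once it leaves every ratio, hence the embedding norm, unchanged.
Taking `|c|² = 1/(2α₁)`, with `arg c²` chosen so that `(β₂ - β₁) c² = -|β₂ - β₁|/(2α₁)`, and
`g(z) = -β₁ c² z²` turns `Φ₁, Φ₂` into `Φ₀, Φ̃`.
-/

open Complex

theorem Complex.lintegral_comp_mul_left {c : ℂ} (hc : c ≠ 0) (g : ℂ → ENNReal) :
    ∫⁻ z, g (c * z) = (‖c‖ₑ ^ 2)⁻¹ * ∫⁻ z, g z := by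
  have hdet : LinearMap.det (Algebra.lmul ℝ ℂ c) = ‖c‖ ^ 2 := by
    rw [← Algebra.norm_apply, Algebra.norm_complex_apply, normSq_eq_norm_sq]
  have hmap : Measure.map (c * ·) volume = (‖c‖ₑ ^ 2)⁻¹ • (volume : Measure ℂ) := by
    have := Measure.map_linearMap_addHaar_eq_smul_addHaar (volume : Measure ℂ)
      (f := Algebra.lmul ℝ ℂ c) (by rw [hdet]; positivity)
    rw [hdet, abs_of_pos (by positivity), ENNReal.ofReal_inv_of_pos (by positivity),
      ENNReal.ofReal_pow (norm_nonneg _), ofReal_norm] at this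
    exact this
  rw [← smul_eq_mul, ← lintegral_smul_measure, ← hmap]
  exact (lintegral_map_equiv g (Homeomorph.mulLeft₀ c hc).toMeasurableEquiv).symm

theorem Complex.exists_sq_mul_eq_neg_norm_mul (w : ℂ) {r : ℝ} (hr : 0 ≤ r) :
    ∃ c : ℂ, ‖c‖ ^ 2 = r ∧ w * c ^ 2 = -(‖w‖ * r) := by
  refine ⟨√r * I * exp (↑(-(arg w / 2)) * I), ?_, ?_⟩
  · rw [norm_mul, norm_mul, norm_exp_ofReal_mul_I, norm_I, norm_real, Real.norm_eq_abs,
      abs_of_nonneg (Real.sqrt_nonneg r), mul_one, mul_one, Real.sq_sqrt hr]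
  · have hexp : exp (↑(-(arg w / 2)) * I) ^ 2 * exp (arg w * I) = 1 := by
      rw [← exp_nat_mul, ← exp_add, ← exp_zero]; push_cast; ring_nf
    calc w * ((√r : ℂ) * I * exp (↑(-(arg w / 2)) * I)) ^ 2
        = -(‖w‖ * (√r : ℂ) ^ 2) * (exp (↑(-(arg w / 2)) * I) ^ 2 * exp (arg w * I)) := by
          rw [mul_pow, mul_pow, I_sq]
          nth_rewrite 1 [← norm_mul_exp_arg_mul_I w]
          ring
      _ = -((‖w‖ : ℂ) * r) := by rw [hexp, mul_one, ← ofReal_pow, Real.sq_sqrt hr]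

theorem wnorm_comp_mul_mul_exp {c : ℂ} (hc : c ≠ 0) {Φ Ψ : ℂ → ℝ} {g : ℂ → ℂ}
    (h : ∀ z, Φ (c * z) = Ψ z - (g z).re) (u : ℂ → ℂ) :
    wnorm Ψ (fun z ↦ u (c * z) * exp (g z)) = ‖c‖ₑ⁻¹ * wnorm Φ u := by
  have hK : ‖c‖ₑ⁻¹ = ((‖c‖ₑ ^ 2)⁻¹) ^ (1 / 2 : ℝ) := by
    rw [ENNReal.inv_rpow, ← ENNReal.rpow_natCast, ← ENNReal.rpow_mul]; norm_num
  rw [hK, wnorm, wnorm, ← ENNReal.mul_rpow_of_nonneg _ _ (by norm_num),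
    ← lintegral_comp_mul_left hc]
  congr 1
  refine lintegral_congr fun z ↦ congrArg ENNReal.ofReal ?_
  rw [norm_mul, mul_pow, norm_exp, h z, mul_assoc, ← Real.exp_nat_mul, ← Real.exp_add]
  ring_nf

theorem embNorm_le_of_comp_mul {c : ℂ} (hc : c ≠ 0) {Φ₁ Φ₂ Ψ₁ Ψ₂ : ℂ → ℝ} {g : ℂ → ℂ}
    (hg : Differentiable ℂ g) (h₁ : ∀ z, Φ₁ (c * z) = Ψ₁ z - (g z).re)
    (h₂ : ∀ z, Φ₂ (c * z) = Ψ₂ z - (g z).re) :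
    embNorm Φ₁ Φ₂ ≤ embNorm Ψ₁ Ψ₂ := by
  have hK₀ : ‖c‖ₑ⁻¹ ≠ 0 := ENNReal.inv_ne_zero.2 enorm_ne_top
  have hK : ‖c‖ₑ⁻¹ ≠ ⊤ := ENNReal.inv_ne_top.2 (enorm_ne_zero.2 hc)
  refine iSup₂_le fun u ⟨hu, hu₀, hu_top⟩ ↦ ?_
  refine le_iSup₂_of_le (fun z ↦ u (c * z) * exp (g z))
    ⟨(hu.comp (differentiable_id.const_mul c)).mul hg.cexp, ?_, ?_⟩ ?_ <;>
    rw [wnorm_comp_mul_mul_exp hc h₁]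
  · exact ENNReal.mul_pos hK₀ hu₀.ne'
  · exact ENNReal.mul_lt_top hK.lt_top hu_top
  · rw [wnorm_comp_mul_mul_exp hc h₂, ENNReal.mul_div_mul_left _ _ hK₀ hK]

theorem embNorm_eq_of_comp_mul {c : ℂ} (hc : c ≠ 0) {Φ₁ Φ₂ Ψ₁ Ψ₂ : ℂ → ℝ} {g : ℂ → ℂ}
    (hg : Differentiable ℂ g) (h₁ : ∀ z, Φ₁ (c * z) = Ψ₁ z - (g z).re)
    (h₂ : ∀ z, Φ₂ (c * z) = Ψ₂ z - (g z).re) :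
    embNorm Φ₁ Φ₂ = embNorm Ψ₁ Ψ₂ := by
  have inv {Φ Ψ : ℂ → ℝ} (h : ∀ z, Φ (c * z) = Ψ z - (g z).re) (z : ℂ) :
      Ψ (c⁻¹ * z) = Φ z - (-g (c⁻¹ * z)).re := by
    rw [← mul_inv_cancel_left₀ hc z, h, inv_mul_cancel_left₀ hc, neg_re]; ring
  exact le_antisymm (embNorm_le_of_comp_mul hc hg h₁ h₂)
    (embNorm_le_of_comp_mul (inv_ne_zero hc) (hg.comp (differentiable_id.const_mul _)).neg
      (inv h₁) (inv h₂))

theorem embNorm_eq_model_general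
    (α₁ α₂ : ℝ) (β₁ β₂ : ℂ) (hα₁ : 0 < α₁)
    (Φ₁ Φ₂ : ℂ → ℝ)
    (hΦ₁ : ∀ z : ℂ, Φ₁ z = α₁ * ‖z‖ ^ 2 + (β₁ * z ^ 2).re)
    (hΦ₂ : ∀ z : ℂ, Φ₂ z = α₂ * ‖z‖ ^ 2 + (β₂ * z ^ 2).re)
    (a b : ℝ) (ha : a = α₂ / α₁) (hb : b = ‖β₂ - β₁‖ / α₁)
    (Φ₀ Φt : ℂ → ℝ)
    (hΦ₀ : ∀ z : ℂ, Φ₀ z = ‖z‖ ^ 2 / 2)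
    (hΦt : ∀ z : ℂ, Φt z = (a * ‖z‖ ^ 2 - b * (z ^ 2).re) / 2) :
    embNorm Φ₁ Φ₂ = embNorm Φ₀ Φt := by
  obtain ⟨c, hc, hwc⟩ :=
    exists_sq_mul_eq_neg_norm_mul (β₂ - β₁) (inv_nonneg.2 (by positivity : 0 ≤ 2 * α₁))
  have hc₀ : c ≠ 0 := by
    rw [← norm_ne_zero_iff, ← pow_ne_zero_iff two_ne_zero, hc]
    positivity
  refine embNorm_eq_of_comp_mul hc₀ (g := fun z ↦ -(β₁ * c ^ 2 * z ^ 2)) (by fun_prop)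
    (fun z ↦ ?_) (fun z ↦ ?_)
  · rw [hΦ₁, hΦ₀, norm_mul, mul_pow, hc, mul_pow, neg_re, ← mul_assoc]
    field_simp
    ring
  · have hβ₂ : β₂ * (c * z) ^ 2 = β₁ * c ^ 2 * z ^ 2 - (‖β₂ - β₁‖ * (2 * α₁)⁻¹ : ℝ) * z ^ 2 := by
      push_cast at hwc ⊢
      linear_combination z ^ 2 * hwc
    rw [hΦ₂, hΦt, norm_mul, mul_pow, hc, hβ₂, sub_re, re_ofReal_mul, neg_re, ha, hb]
    field_simp
    ring

/-- the embedding norm between two strictly plurisubharmonic quadratic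
weights coincides with the embedding norm between the model weights
`Φ₀(z) = |z|²/2` and `Φ̃(z) = (a|z|² - b Re(z²))/2`. -/
theorem embNorm_eq_model
    (α₁ α₂ : ℝ) (β₁ β₂ : ℂ) (hα₁ : 0 < α₁) (hα₂ : 0 < α₂)
    (Φ₁ Φ₂ : ℂ → ℝ)
    (hΦ₁ : ∀ z : ℂ, Φ₁ z = α₁ * ‖z‖ ^ 2 + (β₁ * z ^ 2).re)
    (hΦ₂ : ∀ z : ℂ, Φ₂ z = α₂ * ‖z‖ ^ 2 + (β₂ * z ^ 2).re)
    (a b : ℝ) (ha : a = α₂ / α₁) (hb : b = ‖β₂ - β₁‖ / α₁)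
    (Φ₀ Φt : ℂ → ℝ)
    (hΦ₀ : ∀ z : ℂ, Φ₀ z = ‖z‖ ^ 2 / 2)
    (hΦt : ∀ z : ℂ, Φt z = (a * ‖z‖ ^ 2 - b * (z ^ 2).re) / 2) :
    embNorm Φ₁ Φ₂ = embNorm Φ₀ Φt :=
  embNorm_eq_model_general α₁ α₂ β₁ β₂ hα₁ Φ₁ Φ₂ hΦ₁ hΦ₂ a b ha hb Φ₀ Φt hΦ₀ hΦt
end

section
/- Let a, b be real numbers with b ≥ 0, a − b ≥ 1, and (a,b) ≠ (1,0). Then the supremum over complex γ with |γ| < 1 of (1 − |γ|²)/(a² − |b − γ|²) equals the supremum over real γ ∈ (−1,1) of (1 − γ²)/(a² − (b − γ)²). (Note that a² − |b − γ|² > 0 whenever |γ| < 1 under these hypotheses.) -/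
/-!
Writing `γ = x + iy`, both the numerator and the denominator of the complex ratio are the
corresponding real expressions at `x` minus the same `y²`. The real numerator is at most the
real denominator, so subtracting `y² ≥ 0` from both can only lower the ratio: every value on
the disc is dominated by the value at its real part, while the interval embeds in the disc.
-/

lemma sub_div_sub_le_div {α : Type*} [Field α] [LinearOrder α] [IsStrictOrderedRing α]
    {n d t : α} (ht : 0 ≤ t) (hnd : n ≤ d) (hdt : 0 < d - t) : (n - t) / (d - t) ≤ n / d := by
  rw [div_le_div_iff₀ hdt (by linarith)]
  nlinarith [mul_le_mul_of_nonneg_left hnd ht]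

lemma Complex.sq_norm_eq_re_sq_add_im_sq (z : ℂ) : ‖z‖ ^ 2 = z.re ^ 2 + z.im ^ 2 := by
  rw [Complex.sq_norm, Complex.normSq_apply]
  ring

section

variable {a b : ℝ}

-- The difference of the two sides is `(a² - (b + 1)²) + 2b(1 + r)`.
lemma one_sub_sq_le_sq_sub_sq (hb : 0 ≤ b) (hab : 1 ≤ a - b) {r : ℝ} (hr : -1 ≤ r) :
    1 - r ^ 2 ≤ a ^ 2 - (b - r) ^ 2 := by
  nlinarith

lemma one_sub_sq_norm_le_sq_sub_sq_norm (hb : 0 ≤ b) (hab : 1 ≤ a - b) {γ : ℂ}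
    (hγ : -1 ≤ γ.re) : 1 - ‖γ‖ ^ 2 ≤ a ^ 2 - ‖(b : ℂ) - γ‖ ^ 2 := by
  simp only [Complex.sq_norm_eq_re_sq_add_im_sq, Complex.sub_re, Complex.sub_im,
    Complex.ofReal_re, Complex.ofReal_im, zero_sub, neg_sq]
  linarith [one_sub_sq_le_sq_sub_sq hb hab hγ]

lemma neg_one_lt_re_of_norm_lt_one {γ : ℂ} (hγ : ‖γ‖ < 1) : -1 < γ.re :=
  (neg_lt_neg hγ).trans_le (neg_le_of_abs_le (Complex.abs_re_le_norm γ))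

lemma sq_sub_sq_norm_pos (hb : 0 ≤ b) (hab : 1 ≤ a - b) {γ : ℂ} (hγ : ‖γ‖ < 1) :
    0 < a ^ 2 - ‖(b : ℂ) - γ‖ ^ 2 := by
  have hnum : 0 < 1 - ‖γ‖ ^ 2 := by nlinarith [norm_nonneg γ]
  exact hnum.trans_le
    (one_sub_sq_norm_le_sq_sub_sq_norm hb hab (neg_one_lt_re_of_norm_lt_one hγ).le)

lemma disc_ratio_le_interval_ratio_re (hb : 0 ≤ b) (hab : 1 ≤ a - b) {γ : ℂ}
    (hγ : ‖γ‖ < 1) :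
    (1 - ‖γ‖ ^ 2) / (a ^ 2 - ‖(b : ℂ) - γ‖ ^ 2) ≤
      (1 - γ.re ^ 2) / (a ^ 2 - (b - γ.re) ^ 2) := by
  have hden := sq_sub_sq_norm_pos hb hab hγ
  simp only [Complex.sq_norm_eq_re_sq_add_im_sq, Complex.sub_re, Complex.sub_im,
    Complex.ofReal_re, Complex.ofReal_im, zero_sub, neg_sq, ← sub_sub] at hden ⊢
  exact sub_div_sub_le_div (sq_nonneg γ.im)
    (one_sub_sq_le_sq_sub_sq hb hab (neg_one_lt_re_of_norm_lt_one hγ).le) hden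

end

theorem sup_disc_eq_sup_interval_general
    (a b : ℝ) (hb : 0 ≤ b) (hab : 1 ≤ a - b) :
    (∀ γ : ℂ, ‖γ‖ < 1 → 0 < a ^ 2 - ‖(b : ℂ) - γ‖ ^ 2) ∧
    sSup {x : ℝ | ∃ γ : ℂ, ‖γ‖ < 1 ∧
        x = (1 - ‖γ‖ ^ 2) / (a ^ 2 - ‖(b : ℂ) - γ‖ ^ 2)} =
      sSup {x : ℝ | ∃ γ : ℝ, γ ∈ Set.Ioo (-1 : ℝ) 1 ∧
        x = (1 - γ ^ 2) / (a ^ 2 - (b - γ) ^ 2)} := by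
  refine ⟨fun γ hγ ↦ sq_sub_sq_norm_pos hb hab hγ, ?_⟩
  apply csSup_eq_csSup_of_forall_exists_le
  · rintro _ ⟨γ, hγ, rfl⟩
    have hre : γ.re ∈ Set.Ioo (-1 : ℝ) 1 :=
      ⟨neg_one_lt_re_of_norm_lt_one hγ, (Complex.re_le_norm γ).trans_lt hγ⟩
    exact ⟨_, ⟨γ.re, hre, rfl⟩, disc_ratio_le_interval_ratio_re hb hab hγ⟩
  · rintro _ ⟨r, hr, rfl⟩
    refine ⟨_, ⟨r, ?_, rfl⟩, ?_⟩
    · simpa [abs_lt] using hr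
    · simp [← Complex.ofReal_sub]

/-- for `b ≥ 0`, `a - b ≥ 1`, `(a,b) ≠ (1,0)`, the supremum of
`(1 - |γ|²)/(a² - |b - γ|²)` over complex `γ` in the open unit disc equals the
supremum of `(1 - γ²)/(a² - (b - γ)²)` over real `γ ∈ (-1,1)`; moreover
`a² - |b - γ|² > 0` whenever `|γ| < 1`. -/
theorem sup_disc_eq_sup_interval
    (a b : ℝ) (hb : 0 ≤ b) (hab : 1 ≤ a - b) (hne : (a, b) ≠ (1, 0)) :
    (∀ γ : ℂ, ‖γ‖ < 1 → 0 < a ^ 2 - ‖(b : ℂ) - γ‖ ^ 2) ∧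
    sSup {x : ℝ | ∃ γ : ℂ, ‖γ‖ < 1 ∧
        x = (1 - ‖γ‖ ^ 2) / (a ^ 2 - ‖(b : ℂ) - γ‖ ^ 2)} =
      sSup {x : ℝ | ∃ γ : ℝ, γ ∈ Set.Ioo (-1 : ℝ) 1 ∧
        x = (1 - γ ^ 2) / (a ^ 2 - (b - γ) ^ 2)} :=
  sup_disc_eq_sup_interval_general a b hb hab
end

section
/- Let a, b be real numbers with b > 0 and a − b > 1, and set γ₀ = (1 − a² + b² + √((a² − b² − 1)² − 4b²))/(2b). Then (a² − b² − 1)² − 4b² > 0, γ₀ ∈ (−1, 0), and for every real γ ∈ (−1,1), (1 − γ²)/(a² − (b − γ)²) ≤ (1 − γ₀²)/(a² − (b − γ₀)²); i.e., the function γ ↦ (1 − γ²)/(a² − (b − γ)²) attains its maximum on (−1,1) at γ₀. -/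
/-- for `b > 0` and `a - b > 1`, with
`γ₀ = (1 - a² + b² + √((a² - b² - 1)² - 4b²))/(2b)`, the discriminant
`(a² - b² - 1)² - 4b²` is positive, `γ₀ ∈ (-1, 0)`, and `γ₀` maximizes
`γ ↦ (1 - γ²)/(a² - (b - γ)²)` on `(-1, 1)`. -/
theorem max_at_gamma_zero
    (a b : ℝ) (hb : 0 < b) (hab : 1 < a - b)
    (γ₀ : ℝ)
    (hγ₀ : γ₀ = (1 - a ^ 2 + b ^ 2 + Real.sqrt ((a ^ 2 - b ^ 2 - 1) ^ 2 - 4 * b ^ 2)) / (2 * b)) :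
    0 < (a ^ 2 - b ^ 2 - 1) ^ 2 - 4 * b ^ 2 ∧
    γ₀ ∈ Set.Ioo (-1 : ℝ) 0 ∧
    ∀ γ ∈ Set.Ioo (-1 : ℝ) 1,
      (1 - γ ^ 2) / (a ^ 2 - (b - γ) ^ 2) ≤ (1 - γ₀ ^ 2) / (a ^ 2 - (b - γ₀) ^ 2) := by
  have ha : b + 1 < a := by linarith
  have ht : 2 * b < a ^ 2 - b ^ 2 - 1 := by nlinarith
  have hD : 0 < (a ^ 2 - b ^ 2 - 1) ^ 2 - 4 * b ^ 2 := by nlinarith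
  set s := Real.sqrt ((a ^ 2 - b ^ 2 - 1) ^ 2 - 4 * b ^ 2) with hsdef
  have hs0 : 0 ≤ s := Real.sqrt_nonneg _
  have hs2 : s ^ 2 = (a ^ 2 - b ^ 2 - 1) ^ 2 - 4 * b ^ 2 := Real.sq_sqrt hD.le
  have hst : s < a ^ 2 - b ^ 2 - 1 := by nlinarith
  have hst2 : a ^ 2 - b ^ 2 - 1 - 2 * b < s := by nlinarith
  have hγb : 2 * b * γ₀ = s - (a ^ 2 - b ^ 2 - 1) := by
    rw [hγ₀]; field_simp; ring
  have hkey : b * γ₀ ^ 2 + (a ^ 2 - b ^ 2 - 1) * γ₀ + b = 0 := by nlinarith [hγb, hs2]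
  have hneg : γ₀ < 0 := by nlinarith
  have hgt : -1 < γ₀ := by nlinarith
  refine ⟨hD, ⟨hgt, hneg⟩, ?_⟩
  intro γ ⟨hγ1, hγ2⟩
  have hden : 0 < a ^ 2 - (b - γ) ^ 2 := by nlinarith
  have hden0 : 0 < a ^ 2 - (b - γ₀) ^ 2 := by nlinarith
  rw [div_le_div_iff₀ hden hden0]
  have hid : (1 - γ₀ ^ 2) * (a ^ 2 - (b - γ) ^ 2) - (1 - γ ^ 2) * (a ^ 2 - (b - γ₀) ^ 2)
      = s * (γ - γ₀) ^ 2 := by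
    linear_combination ((γ - γ₀) ^ 2) * hγb + 2 * (γ - γ₀) * hkey
  nlinarith [mul_nonneg hs0 (sq_nonneg (γ - γ₀))]
end

section
/- For every complex number t with Re t > 0, the principal argument of tanh t satisfies arg(tanh t) = arctan( sin(2 Im t) / sinh(2 Re t) ); in particular Re(tanh t) > 0, so arg(tanh t) ∈ (−π/2, π/2). -/
/-!
Multiplying numerator and denominator of `sinh t / cosh t` by `conj (cosh t)` gives
`tanh t = (sinh 2x + i sin 2y) / (cosh 2x + cos 2y)` for `t = x + iy`. For `x > 0` the denominator is
positive, since `cosh 2x > 1 ≥ -cos 2y`, so `tanh t` is a positive multiple of `sinh 2x + i sin 2y`,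
a number in the right half-plane, whose argument is the arctangent of `im / re`.
-/

open Complex ComplexConjugate

namespace Complex

theorem sinh_eq_re_add_im (z : ℂ) :
    sinh z = Real.sinh z.re * Real.cos z.im + Real.cosh z.re * Real.sin z.im * I := by
  rw [← re_add_im z, sinh_add, cosh_mul_I, sinh_mul_I]
  push_cast
  simp only [re_add_im]
  ring

theorem cosh_eq_re_add_im (z : ℂ) :
    cosh z = Real.cosh z.re * Real.cos z.im + Real.sinh z.re * Real.sin z.im * I := by
  rw [← re_add_im z, cosh_add, cosh_mul_I, sinh_mul_I]
  push_cast
  simp only [re_add_im]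
  ring

theorem sinh_mul_conj_cosh (z : ℂ) :
    sinh z * conj (cosh z) = (Real.sinh (2 * z.re) + Real.sin (2 * z.im) * I) / 2 := by
  rw [sinh_eq_re_add_im, cosh_eq_re_add_im, Real.sinh_two_mul, Real.sin_two_mul]
  apply ext <;>
    simp only [mul_re, mul_im, add_re, add_im, map_add, map_mul, conj_ofReal, conj_I, ofReal_re,
      ofReal_im, I_re, I_im, div_ofNat_re, div_ofNat_im, neg_re, neg_im]
  · linear_combination (Real.sinh z.re * Real.cosh z.re) * Real.sin_sq_add_cos_sq z.im
  · linear_combination (Real.sin z.im * Real.cos z.im) * Real.cosh_sq_sub_sinh_sq z.re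

theorem normSq_cosh (z : ℂ) :
    normSq (cosh z) = (Real.cosh (2 * z.re) + Real.cos (2 * z.im)) / 2 := by
  rw [cosh_eq_re_add_im, normSq_apply, Real.cosh_two_mul, Real.cos_two_mul]
  simp only [mul_re, mul_im, add_re, add_im, ofReal_re, ofReal_im, I_re, I_im]
  linear_combination (Real.cos z.im ^ 2 - 1 / 2) * Real.cosh_sq_sub_sinh_sq z.re +
    Real.sinh z.re ^ 2 * Real.sin_sq_add_cos_sq z.im

theorem tanh_eq_inv_mul (z : ℂ) :
    tanh z = ((Real.cosh (2 * z.re) + Real.cos (2 * z.im))⁻¹ : ℝ) *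
      (Real.sinh (2 * z.re) + Real.sin (2 * z.im) * I) := by
  rw [tanh_eq_sinh_div_cosh, div_eq_mul_inv, inv_def, ← mul_assoc, sinh_mul_conj_cosh,
    normSq_cosh, ofReal_inv, ofReal_div, inv_div]
  push_cast
  ring

theorem arg_eq_arctan_of_re_pos {z : ℂ} (hz : 0 < z.re) : arg z = Real.arctan (z.im / z.re) := by
  have h := abs_lt.1 (abs_arg_lt_pi_div_two_iff.2 (Or.inl hz))
  rw [← tan_arg, Real.arctan_tan h.1 h.2]

end Complex

theorem Real.cosh_two_mul_add_cos_pos {x : ℝ} (hx : x ≠ 0) (y : ℝ) :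
    0 < Real.cosh (2 * x) + Real.cos (2 * y) := by
  have := Real.one_lt_cosh.2 (mul_ne_zero two_ne_zero hx)
  linarith [Real.neg_one_le_cos (2 * y)]

/-- for `Re t > 0`, `arg(tanh t) = arctan(sin(2 Im t)/sinh(2 Re t))`;
in particular `Re(tanh t) > 0` and `arg(tanh t) ∈ (-π/2, π/2)`. -/
theorem arg_tanh_eq (t : ℂ) (ht : 0 < t.re) :
    Complex.arg (Complex.tanh t) =
      Real.arctan (Real.sin (2 * t.im) / Real.sinh (2 * t.re)) ∧
    0 < (Complex.tanh t).re ∧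
    |Complex.arg (Complex.tanh t)| < Real.pi / 2 := by
  set w : ℂ := Real.sinh (2 * t.re) + Real.sin (2 * t.im) * I
  have hw_re : w.re = Real.sinh (2 * t.re) := by
    simp only [w, add_re, ofReal_re, re_ofReal_mul, I_re, mul_zero, add_zero]
  have hw_im : w.im = Real.sin (2 * t.im) := by
    simp only [w, add_im, ofReal_im, im_ofReal_mul, I_im, mul_one, zero_add]
  have hr : 0 < (Real.cosh (2 * t.re) + Real.cos (2 * t.im))⁻¹ :=
    inv_pos.2 (Real.cosh_two_mul_add_cos_pos ht.ne' _)
  have hw : 0 < w.re := hw_re ▸ Real.sinh_pos_iff.2 (mul_pos two_pos ht)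
  have hre : 0 < (tanh t).re := by
    rw [tanh_eq_inv_mul, re_ofReal_mul]
    exact mul_pos hr hw
  refine ⟨?_, hre, abs_arg_lt_pi_div_two_iff.2 (Or.inl hre)⟩
  rw [tanh_eq_inv_mul, arg_real_mul _ hr, arg_eq_arctan_of_re_pos hw, hw_re, hw_im]
end

section
/- Let θ ∈ (0, π/2) and let t ∈ ℂ with Re t > 0. Then e^{4 Re t} − |e^{4t} − 1|·sin θ ≥ 1 if and only if |arg(tanh t)| ≤ π/2 − θ. Moreover the same equivalence holds with both inequalities strict: e^{4 Re t} − |e^{4t} − 1|·sin θ > 1 if and only if |arg(tanh t)| < π/2 − θ. -/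
/-! With `z = exp (2 t)` one has `tanh t = (z - 1) / (z + 1)`, whose real part is
`(|z|² - 1) / |z + 1|²`; hence `cos (arg (tanh t)) = (e^{4 Re t} - 1) / |e^{4t} - 1|`, because
`|e^{4t} - 1| = |z - 1| |z + 1|`. Both inequalities of the theorem then say that this cosine is at
least (resp. greater than) `sin θ = cos (π/2 - θ)`, and `cos` is strictly decreasing on `[0, π]`. -/

open Real Set

theorem Real.abs_le_pi_div_two_sub_iff_sin_le_cos {x θ : ℝ} (hx : |x| ≤ π)
    (hθ : θ ∈ Icc (-(π / 2)) (π / 2)) : |x| ≤ π / 2 - θ ↔ sin θ ≤ cos x := by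
  rw [← cos_abs x, ← cos_pi_div_two_sub]
  exact (strictAntiOn_cos.le_iff_ge ⟨by linarith [hθ.2], by linarith [hθ.1]⟩
    ⟨abs_nonneg x, hx⟩).symm

theorem Real.abs_lt_pi_div_two_sub_iff_sin_lt_cos {x θ : ℝ} (hx : |x| ≤ π)
    (hθ : θ ∈ Icc (-(π / 2)) (π / 2)) : |x| < π / 2 - θ ↔ sin θ < cos x := by
  rw [← cos_abs x, ← cos_pi_div_two_sub]
  exact (strictAntiOn_cos.lt_iff_gt ⟨by linarith [hθ.2], by linarith [hθ.1]⟩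
    ⟨abs_nonneg x, hx⟩).symm

namespace Complex

theorem tanh_eq_exp_two_mul (t : ℂ) : tanh t = (exp (2 * t) - 1) / (exp (2 * t) + 1) := by
  have h2 : exp (2 * t) = exp t * exp t := by rw [← exp_add, two_mul]
  rw [tanh_eq_sinh_div_cosh, sinh, cosh, div_div_div_cancel_right₀ two_ne_zero,
    ← mul_div_mul_left _ _ (exp_ne_zero t), h2, mul_sub, mul_add, exp_neg,
    mul_inv_cancel₀ (exp_ne_zero t)]

theorem re_div_sub_one_add_one (z : ℂ) :
    ((z - 1) / (z + 1)).re = (‖z‖ ^ 2 - 1) / ‖z + 1‖ ^ 2 := by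
  rw [div_re, Complex.sq_norm, Complex.sq_norm]
  simp only [sub_re, sub_im, add_re, add_im, one_re, one_im, normSq_apply]
  ring

theorem cos_arg_tanh {t : ℂ} (h : exp (4 * t) ≠ 1) :
    Real.cos (arg (tanh t)) = (Real.exp (4 * t.re) - 1) / ‖exp (4 * t) - 1‖ := by
  set z := exp (2 * t)
  have hsq : exp (4 * t) - 1 = (z - 1) * (z + 1) := by
    rw [show (4 : ℂ) * t = 2 * t + 2 * t by ring, exp_add]; ring
  have hz : ‖z‖ ^ 2 = Real.exp (4 * t.re) := by
    rw [norm_exp, ← Real.exp_nat_mul]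
    simp only [mul_re, re_ofNat, im_ofNat]
    ring_nf
  rw [← sub_ne_zero, hsq] at h
  obtain ⟨hm, hp⟩ := mul_ne_zero_iff.1 h
  rw [tanh_eq_exp_two_mul, cos_arg (div_ne_zero hm hp), re_div_sub_one_add_one, norm_div, hz, hsq,
    norm_mul]
  field_simp

end Complex

/-- for `θ ∈ (0, π/2)` and `Re t > 0`,
`e^{4 Re t} - |e^{4t} - 1| sin θ ≥ 1 ↔ |arg(tanh t)| ≤ π/2 - θ`, and the same
equivalence with both inequalities strict. -/
theorem boundedness_region_eq
    (θ : ℝ) (hθ : θ ∈ Set.Ioo 0 (Real.pi / 2)) (t : ℂ) (ht : 0 < t.re) :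
    (1 ≤ Real.exp (4 * t.re) - ‖Complex.exp (4 * t) - 1‖ * Real.sin θ ↔
      |Complex.arg (Complex.tanh t)| ≤ Real.pi / 2 - θ) ∧
    (1 < Real.exp (4 * t.re) - ‖Complex.exp (4 * t) - 1‖ * Real.sin θ ↔
      |Complex.arg (Complex.tanh t)| < Real.pi / 2 - θ) := by
  have hθ_Icc : θ ∈ Icc (-(π / 2)) (π / 2) := ⟨by linarith [hθ.1, pi_pos], hθ.2.le⟩
  have hexp : 1 < ‖Complex.exp (4 * t)‖ := by
    rw [Complex.norm_exp, one_lt_exp_iff]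
    simpa using ht
  have hne : Complex.exp (4 * t) ≠ 1 := fun h ↦ by simp [h] at hexp
  have hpos : 0 < ‖Complex.exp (4 * t) - 1‖ := norm_pos_iff.2 (sub_ne_zero.2 hne)
  rw [abs_le_pi_div_two_sub_iff_sin_le_cos (Complex.abs_arg_le_pi _) hθ_Icc,
    abs_lt_pi_div_two_sub_iff_sin_lt_cos (Complex.abs_arg_le_pi _) hθ_Icc,
    Complex.cos_arg_tanh hne, le_div_iff₀ hpos, lt_div_iff₀ hpos]
  constructor <;> constructor <;> intro h <;> linarith
end

section
/- Fix real θ, φ with |θ| < π/2 and |φ| ≤ π/2 − |θ|. For real s > 0 set A(s) = (1/2)|sinh(2 s e^{iφ})|²·(cos 2θ + cos(2·arg(tanh(s e^{iφ})))) and N(s) = (√(1+A(s)) + √A(s))^{−1/2}. Then lim_{s → 0⁺} (N(s) − 1)/s = −√(cos(φ+θ)·cos(φ−θ)). (This is the short-time derivative of the norm ‖e^{−s e^{iφ} Q_θ}‖ via the formula of Theorem 1.1.) -/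
/-!
As `s → 0⁺`, `sinh (2 s e^{iφ}) ~ 2 s e^{iφ}` and `tanh (s e^{iφ}) / s → e^{iφ}`, so
`arg (tanh (s e^{iφ})) → φ` and
`A(s) / s² → 2 (cos 2θ + cos 2φ) = 4 cos(φ+θ) cos(φ-θ) =: 4K`.
Hence `√(A s)` has right derivative `2√K` at `0` while `A` itself has right derivative `0`,
and the chain rule for `u ↦ u^(-1/2)` at `u = 1` gives `N'(0⁺) = -½ · 2√K`.
-/

open Filter Topology Set

namespace Complex

theorem hasDerivAt_tanh_zero : HasDerivAt tanh 1 0 := by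
  rw [show tanh = sinh / cosh from funext tanh_eq_sinh_div_cosh]
  simpa using (hasDerivAt_sinh 0).div (hasDerivAt_cosh 0) (by simp)

theorem tendsto_comp_ofReal_mul_div {f : ℂ → ℂ} {f' : ℂ} (hf : HasDerivAt f f' 0)
    (hf0 : f 0 = 0) (c : ℂ) : Tendsto (fun s : ℝ => f (s * c) / s) (𝓝[≠] 0) (𝓝 (f' * c)) := by
  have hg : HasDerivAt (fun s : ℝ => f (s * c)) (f' * c) 0 :=
    (hf.comp_of_eq _ (hasDerivAt_mul_const c) (by simp)).comp_ofReal
  simpa [hf0, div_eq_inv_mul] using hg.tendsto_slope_zero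

theorem tendsto_norm_sinh_ofReal_mul_sq_div_sq (c : ℂ) :
    Tendsto (fun s : ℝ => ‖sinh (s * c)‖ ^ 2 / s ^ 2) (𝓝[≠] 0) (𝓝 (‖c‖ ^ 2)) := by
  simpa [norm_div, div_pow] using
    ((tendsto_comp_ofReal_mul_div (hasDerivAt_sinh 0) sinh_zero c).norm).pow 2

theorem tendsto_arg_tanh_ofReal_mul {c : ℂ} (hc : c ∈ slitPlane) :
    Tendsto (fun s : ℝ => arg (tanh (s * c))) (𝓝[>] 0) (𝓝 (arg c)) := by
  have h := (continuousAt_arg hc).tendsto.comp <| one_mul c ▸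
    (tendsto_comp_ofReal_mul_div hasDerivAt_tanh_zero tanh_zero c).mono_left (nhdsGT_le_nhdsNE 0)
  refine h.congr' ?_
  filter_upwards [self_mem_nhdsWithin] with s (hs : 0 < s)
  rw [Function.comp_apply, div_eq_inv_mul, ← ofReal_inv, arg_real_mul _ (inv_pos.2 hs)]

end Complex

section
variable {a : ℝ → ℝ} {L : ℝ}

theorem hasDerivWithinAt_zero_of_tendsto_div_sq (ha0 : a 0 = 0)
    (ha : Tendsto (fun s => a s / s ^ 2) (𝓝[>] 0) (𝓝 L)) : HasDerivWithinAt a 0 (Ioi 0) 0 := by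
  rw [hasDerivWithinAt_iff_tendsto_slope' self_notMem_Ioi]
  have h := mul_zero L ▸
    ha.mul (tendsto_nhdsWithin_of_tendsto_nhds (tendsto_id (x := 𝓝 (0 : ℝ))))
  refine h.congr' ?_
  filter_upwards [self_mem_nhdsWithin] with s (hs : 0 < s)
  rw [slope_def_field, ha0, id, sub_zero, sub_zero]
  field_simp

theorem hasDerivWithinAt_sqrt_of_tendsto_div_sq (ha0 : a 0 = 0)
    (ha : Tendsto (fun s => a s / s ^ 2) (𝓝[>] 0) (𝓝 L)) :
    HasDerivWithinAt (fun s => √(a s)) √L (Ioi 0) 0 := by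
  rw [hasDerivWithinAt_iff_tendsto_slope' self_notMem_Ioi]
  refine ((Real.continuous_sqrt.tendsto L).comp ha).congr' ?_
  filter_upwards [self_mem_nhdsWithin] with s (hs : 0 < s)
  rw [slope_def_field, ha0, Function.comp_apply, Real.sqrt_div' _ (sq_nonneg s),
    Real.sqrt_sq hs.le]
  simp

theorem hasDerivWithinAt_rpow_sqrt_add_sqrt (ha0 : a 0 = 0)
    (ha : Tendsto (fun s => a s / s ^ 2) (𝓝[>] 0) (𝓝 L)) :
    HasDerivWithinAt (fun s => (√(1 + a s) + √(a s)) ^ (-(1 / 2) : ℝ)) (-√L / 2) (Ioi 0) 0 := by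
  have hu : HasDerivWithinAt (fun s => √(1 + a s) + √(a s)) √L (Ioi 0) 0 := by
    simpa only [zero_div, zero_add] using
      (((hasDerivWithinAt_zero_of_tendsto_div_sq ha0 ha).const_add 1).sqrt
        (by simp [ha0])).fun_add (hasDerivWithinAt_sqrt_of_tendsto_div_sq ha0 ha)
  have hu0 : √(1 + a 0) + √(a 0) = 1 := by simp [ha0]
  convert hu.rpow_const (p := -(1 / 2)) (by simp [hu0]) using 1
  rw [hu0]
  ring

end

theorem cos_two_mul_add_cos_two_mul (θ φ : ℝ) :
    Real.cos (2 * θ) + Real.cos (2 * φ) = 2 * (Real.cos (φ + θ) * Real.cos (φ - θ)) := by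
  rw [Real.cos_add_cos, show (2 * θ + 2 * φ) / 2 = φ + θ by ring,
    show (2 * θ - 2 * φ) / 2 = -(φ - θ) by ring, Real.cos_neg]
  ring

theorem short_time_derivative_general
    (θ φ : ℝ) (hφ : |φ| ≤ Real.pi / 2 - |θ|)
    (A N : ℝ → ℝ)
    (hA : ∀ s : ℝ, A s = 1 / 2 *
        ‖Complex.sinh (2 * (s * Complex.exp (φ * Complex.I)))‖ ^ 2 *
        (Real.cos (2 * θ) +
          Real.cos (2 * Complex.arg (Complex.tanh (s * Complex.exp (φ * Complex.I))))))
    (hN : ∀ s : ℝ, N s = (Real.sqrt (1 + A s) + Real.sqrt (A s)) ^ (-(1 / 2) : ℝ)) :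
    Tendsto (fun s : ℝ => (N s - 1) / s) (nhdsWithin 0 (Set.Ioi 0))
      (nhds (-Real.sqrt (Real.cos (φ + θ) * Real.cos (φ - θ)))) := by
  set e := Complex.exp (φ * Complex.I) with he_def
  have hφπ : φ ∈ Ioo (-Real.pi) Real.pi := by
    have hφ' : |φ| ≤ Real.pi / 2 := hφ.trans (by linarith [abs_nonneg θ])
    obtain ⟨h₁, h₂⟩ := abs_le.1 hφ'
    constructor <;> linarith [Real.pi_pos]
  have harg : e.arg = φ := by
    rw [he_def, Complex.exp_mul_I]
    exact Complex.arg_cos_add_sin_mul_I (Ioo_subset_Ioc_self hφπ)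
  have he : e ∈ Complex.slitPlane :=
    Complex.mem_slitPlane_iff_arg.2 ⟨harg.trans_ne hφπ.2.ne, Complex.exp_ne_zero _⟩
  have hsinh := ((Complex.tendsto_norm_sinh_ofReal_mul_sq_div_sq (2 * e)).mono_left
    (nhdsGT_le_nhdsNE 0)).const_mul (1 / 2)
  have hcos := ((Real.continuous_cos.tendsto _).comp
    ((Complex.tendsto_arg_tanh_ofReal_mul he).const_mul 2)).const_add (Real.cos (2 * θ))
  have hlim : Tendsto (fun s => A s / s ^ 2) (𝓝[>] 0)
      (𝓝 (4 * (Real.cos (φ + θ) * Real.cos (φ - θ)))) := by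
    convert hsinh.mul hcos using 2 with s
    · rw [hA, Function.comp_apply, mul_left_comm (2 : ℂ)]
      ring
    · simp [e, harg, cos_two_mul_add_cos_two_mul]
      ring
  have hN' := hasDerivWithinAt_rpow_sqrt_add_sqrt (by simp [hA]) hlim
  rw [← funext hN, hasDerivWithinAt_iff_tendsto_slope' self_notMem_Ioi] at hN'
  convert hN' using 2 with s
  · simp [slope_def_field, hN, hA]
  · rw [Real.sqrt_mul zero_le_four, show (4 : ℝ) = 2 ^ 2 by norm_num, Real.sqrt_sq zero_le_two]
    ring

/-- short-time derivative of the norm: with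
`A(s) = ½|sinh(2 s e^{iφ})|²(cos 2θ + cos(2 arg(tanh(s e^{iφ}))))` and
`N(s) = (√(1+A(s)) + √A(s))^{-1/2}`, one has
`(N(s) - 1)/s → -√(cos(φ+θ)cos(φ-θ))` as `s → 0⁺`. -/
theorem short_time_derivative
    (θ φ : ℝ) (hθ : |θ| < Real.pi / 2) (hφ : |φ| ≤ Real.pi / 2 - |θ|)
    (A N : ℝ → ℝ)
    (hA : ∀ s : ℝ, A s = 1 / 2 *
        ‖Complex.sinh (2 * (s * Complex.exp (φ * Complex.I)))‖ ^ 2 *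
        (Real.cos (2 * θ) +
          Real.cos (2 * Complex.arg (Complex.tanh (s * Complex.exp (φ * Complex.I))))))
    (hN : ∀ s : ℝ, N s = (Real.sqrt (1 + A s) + Real.sqrt (A s)) ^ (-(1 / 2) : ℝ)) :
    Tendsto (fun s : ℝ => (N s - 1) / s) (nhdsWithin 0 (Set.Ioi 0))
      (nhds (-Real.sqrt (Real.cos (φ + θ) * Real.cos (φ - θ)))) :=
  short_time_derivative_general θ φ hφ A N hA hN
end

section
/- Let n ≥ 1, let B be a real symmetric positive definite 2n × 2n matrix, and let J be the standard symplectic 2n × 2n matrix (in block form J = [[0, −I_n],[I_n, 0]]). Then every eigenvalue of the matrix JB (equivalently, every root in ℂ of the characteristic polynomial of JB) is purely imaginary and nonzero. -/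
/-!
Let `JBv = μv` with `v ≠ 0` (over `ℂ`) and put `w = Bv`. Then `w* J w = μ (w* v) = μ · conj (v* B v)`,
where `v* B v` is real and positive because `B` is positive definite, while `w* J w` is purely
imaginary because `J` is antisymmetric. Hence `μ` is purely imaginary; it is nonzero because
`JB` is invertible.
-/

open Matrix
open scoped ComplexOrder MatrixOrder

namespace Matrix

variable {m : Type*}

lemma exists_mulVec_eq_smul_of_isRoot_charpoly [Fintype m] [DecidableEq m] {R : Type*}
    [CommRing R] [IsDomain R] {M : Matrix m m R} {μ : R} (h : M.charpoly.IsRoot μ) :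
    ∃ v ≠ 0, M *ᵥ v = μ • v := by
  obtain ⟨v, hv⟩ := ((Module.End.hasEigenvalue_iff_isRoot_charpoly M.mulVecLin μ).2
    (by rwa [charpoly_mulVecLin])).exists_hasEigenvector
  exact ⟨v, hv.2, hv.apply_eq_smul⟩

lemma ne_zero_of_mulVec_eq_smul [Fintype m] [DecidableEq m] {R : Type*} [CommRing R]
    {M : Matrix m m R} (hM : IsUnit M) {v : m → R} (hv : v ≠ 0) {μ : R}
    (h : M *ᵥ v = μ • v) : μ ≠ 0 := by
  rintro rfl
  exact hv (mulVec_injective_of_isUnit hM (by simpa using h))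

lemma PosDef.map_ofReal [Fintype m] [DecidableEq m] {B : Matrix m m ℝ} (hB : B.PosDef) :
    (B.map (algebraMap ℝ ℂ)).PosDef := by
  obtain ⟨C, rfl⟩ := CStarAlgebra.nonneg_iff_eq_star_mul_self.mp hB.posSemidef.nonneg
  have hC : (star C * C).map (algebraMap ℝ ℂ) =
      (C.map (algebraMap ℝ ℂ))ᴴ * C.map (algebraMap ℝ ℂ) := by
    rw [Matrix.map_mul, star_eq_conjTranspose, conjTranspose_map _ fun x => by simp]
  rw [hC, (posSemidef_conjTranspose_mul_self _).posDef_iff_det_ne_zero, ← hC,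
    ← RingHom.mapMatrix_apply, ← RingHom.map_det]
  simpa using hB.det_pos.ne'

lemma conjTranspose_map_ofReal_of_transpose_eq_neg {A : Matrix m m ℝ} (hA : Aᵀ = -A) :
    (A.map (algebraMap ℝ ℂ))ᴴ = -A.map (algebraMap ℝ ℂ) := by
  rw [← conjTranspose_map _ fun x => by simp, conjTranspose_eq_transpose_of_trivial, hA,
    Matrix.map_neg _ (map_neg _)]

lemma re_star_dotProduct_mulVec_eq_zero [Fintype m] {A : Matrix m m ℂ} (hA : Aᴴ = -A)
    (w : m → ℂ) : (star w ⬝ᵥ (A *ᵥ w)).re = 0 := by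
  have h : star (star w ⬝ᵥ (A *ᵥ w)) = -(star w ⬝ᵥ (A *ᵥ w)) := by
    rw [← star_dotProduct, star_mulVec, ← dotProduct_mulVec, hA, neg_mulVec, dotProduct_neg]
  have := congrArg Complex.re h
  simp only [Complex.star_def, Complex.conj_re, Complex.neg_re] at this
  linarith

lemma re_eq_zero_of_mul_mulVec_eq_smul [Fintype m] {A B : Matrix m m ℂ} (hA : Aᴴ = -A)
    (hB : B.PosDef) {v : m → ℂ} (hv : v ≠ 0) {μ : ℂ} (h : (A * B) *ᵥ v = μ • v) :
    μ.re = 0 := by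
  obtain ⟨hc, hc'⟩ := Complex.pos_iff.mp (hB.dotProduct_mulVec_pos hv)
  have hμc : star (B *ᵥ v) ⬝ᵥ (A *ᵥ (B *ᵥ v)) = μ * star (star v ⬝ᵥ (B *ᵥ v)) := by
    rw [mulVec_mulVec, h, dotProduct_smul, smul_eq_mul, star_dotProduct]
  have := re_star_dotProduct_mulVec_eq_zero hA (B *ᵥ v)
  rw [hμc, Complex.star_def, Complex.mul_re, Complex.conj_re, Complex.conj_im, ← hc',
    neg_zero, mul_zero, sub_zero] at this
  exact (mul_eq_zero.mp this).resolve_right hc.ne'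

end Matrix

theorem eigenvalues_JB_purely_imaginary_general
    (n : ℕ)
    (B : Matrix (Fin n ⊕ Fin n) (Fin n ⊕ Fin n) ℝ)
    (hB : B.PosDef)
    (J : Matrix (Fin n ⊕ Fin n) (Fin n ⊕ Fin n) ℝ)
    (hJ : J = Matrix.fromBlocks 0 (-1) 1 0) :
    ∀ μ : ℂ, ((J * B).charpoly.map (algebraMap ℝ ℂ)).IsRoot μ → μ.re = 0 ∧ μ ≠ 0 := by
  intro μ hμ
  replace hJ : J = Matrix.J (Fin n) ℝ := hJ
  subst hJ
  rw [← charpoly_map] at hμ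
  obtain ⟨v, hv, hJBv⟩ := exists_mulVec_eq_smul_of_isRoot_charpoly hμ
  have hJB : IsUnit (Matrix.J (Fin n) ℝ * B) :=
    ((isUnit_iff_isUnit_det _).mpr (isUnit_det_J _ _)).mul hB.isUnit
  refine ⟨?_, ne_zero_of_mulVec_eq_smul (hJB.map (algebraMap ℝ ℂ).mapMatrix) hv hJBv⟩
  rw [Matrix.map_mul] at hJBv
  exact re_eq_zero_of_mul_mulVec_eq_smul
    (conjTranspose_map_ofReal_of_transpose_eq_neg (J_transpose _ _)) hB.map_ofReal hv hJBv

/-- for `B` a real symmetric positive definite `2n × 2n` matrix and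
`J = [[0, -I],[I, 0]]` the standard symplectic matrix, every complex root of the
characteristic polynomial of `JB` is purely imaginary and nonzero. -/
theorem eigenvalues_JB_purely_imaginary
    (n : ℕ) (hn : 1 ≤ n)
    (B : Matrix (Fin n ⊕ Fin n) (Fin n ⊕ Fin n) ℝ)
    (hB : B.PosDef)
    (J : Matrix (Fin n ⊕ Fin n) (Fin n ⊕ Fin n) ℝ)
    (hJ : J = Matrix.fromBlocks 0 (-1) 1 0) :
    ∀ μ : ℂ, ((J * B).charpoly.map (algebraMap ℝ ℂ)).IsRoot μ → μ.re = 0 ∧ μ ≠ 0 :=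
  eigenvalues_JB_purely_imaginary_general n B hB J hJ
end

section
/- Let n ≥ 1 and let A₁, A₂ be complex symmetric 2n × 2n matrices whose real parts Re A₁, Re A₂ (the real matrices of entrywise real parts) are positive definite. With J the standard symplectic 2n × 2n matrix [[0, −I_n],[I_n, 0]], the matrix D = I − (1/4)·A₂ J A₁ J is invertible. -/
/-!
Suppose `D z = 0` with `z ≠ 0`, and put `w = J z`, `t = J A₁ w`, so that `4 z = A₂ t`.
From `J² = -1` and `Jᴴ = -J` one gets `w* A₁ w = -¼ · conj (t* A₂ t)`. For a symmetric `A` and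
`z = x + i y` the antisymmetric cross terms cancel, so `Re (z* A z) = xᵀ (Re A) x + yᵀ (Re A) y`.
Hence the left-hand side has positive real part and the right-hand side a nonpositive one.
-/

open Matrix Complex

section QuadraticForm

variable {m : Type*} [Fintype m]

lemma re_star_dotProduct_mulVec (A : Matrix m m ℂ) (z : m → ℂ) :
    (star z ⬝ᵥ A *ᵥ z).re =
      (re ∘ z) ⬝ᵥ A.map re *ᵥ (re ∘ z) + (im ∘ z) ⬝ᵥ A.map re *ᵥ (im ∘ z) +
        ((im ∘ z) ⬝ᵥ A.map im *ᵥ (re ∘ z) - (re ∘ z) ⬝ᵥ A.map im *ᵥ (im ∘ z)) := by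
  simp only [dotProduct, mulVec, Finset.mul_sum, re_sum, ← Finset.sum_add_distrib,
    ← Finset.sum_sub_distrib]
  refine Finset.sum_congr rfl fun i _ => Finset.sum_congr rfl fun j _ => ?_
  simp only [Pi.star_apply, RCLike.star_def, mul_re, mul_im, conj_re, conj_im, map_apply,
    Function.comp_apply]
  ring

lemma re_star_dotProduct_mulVec_of_transpose_eq {A : Matrix m m ℂ} (hA : Aᵀ = A) (z : m → ℂ) :
    (star z ⬝ᵥ A *ᵥ z).re =
      (re ∘ z) ⬝ᵥ A.map re *ᵥ (re ∘ z) + (im ∘ z) ⬝ᵥ A.map re *ᵥ (im ∘ z) := by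
  have h_im : (A.map im)ᵀ = A.map im := by rw [← transpose_map, hA]
  have h_cross : (im ∘ z) ⬝ᵥ A.map im *ᵥ (re ∘ z) = (re ∘ z) ⬝ᵥ A.map im *ᵥ (im ∘ z) := by
    rw [dotProduct_mulVec, ← mulVec_transpose, h_im, dotProduct_comm]
  rw [re_star_dotProduct_mulVec, h_cross, sub_self, add_zero]

lemma re_star_dotProduct_mulVec_nonneg {A : Matrix m m ℂ} (hA : Aᵀ = A)
    (hre : (A.map re).PosSemidef) (z : m → ℂ) : 0 ≤ (star z ⬝ᵥ A *ᵥ z).re := by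
  rw [re_star_dotProduct_mulVec_of_transpose_eq hA]
  have hu := hre.dotProduct_mulVec_nonneg (re ∘ z)
  have hv := hre.dotProduct_mulVec_nonneg (im ∘ z)
  simp only [star_trivial] at hu hv
  positivity

lemma re_star_dotProduct_mulVec_pos {A : Matrix m m ℂ} (hA : Aᵀ = A)
    (hre : (A.map re).PosDef) {z : m → ℂ} (hz : z ≠ 0) : 0 < (star z ⬝ᵥ A *ᵥ z).re := by
  rw [re_star_dotProduct_mulVec_of_transpose_eq hA]
  have h_nonneg (x : m → ℝ) : 0 ≤ x ⬝ᵥ A.map re *ᵥ x := by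
    simpa using hre.posSemidef.dotProduct_mulVec_nonneg x
  have h_pos {x : m → ℝ} (hx : x ≠ 0) : 0 < x ⬝ᵥ A.map re *ᵥ x := by
    simpa using hre.dotProduct_mulVec_pos hx
  have h_ne : re ∘ z ≠ 0 ∨ im ∘ z ≠ 0 := by
    by_contra! h
    exact hz (funext fun i => Complex.ext (congrFun h.1 i) (congrFun h.2 i))
  rcases h_ne with h | h
  · linarith [h_pos h, h_nonneg (im ∘ z)]
  · linarith [h_pos h, h_nonneg (re ∘ z)]

end QuadraticForm

theorem isUnit_one_sub_smul_mul_of_re_pos {m : Type*} [Fintype m] [DecidableEq m]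
    {A₁ A₂ J : Matrix m m ℂ} (hJ : Jᴴ = -J) (hJJ : J * J = -1)
    (h₁ : ∀ z ≠ 0, 0 < (star z ⬝ᵥ A₁ *ᵥ z).re) (h₂ : ∀ z, 0 ≤ (star z ⬝ᵥ A₂ *ᵥ z).re)
    {c : ℝ} (hc : 0 ≤ c) : IsUnit (1 - (c : ℂ) • (A₂ * J * A₁ * J)) := by
  rw [isUnit_iff_isUnit_det, isUnit_iff_ne_zero]
  intro hdet
  obtain ⟨z, hz, hMz⟩ := exists_mulVec_eq_zero_iff.2 hdet
  have hJJv : ∀ v, J *ᵥ (J *ᵥ v) = -v := fun v => by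
    rw [mulVec_mulVec, hJJ, neg_mulVec, one_mulVec]
  set w := J *ᵥ z
  set t := J *ᵥ (A₁ *ᵥ w)
  have hz_eq : z = (c : ℂ) • (A₂ *ᵥ t) := by
    rwa [sub_mulVec, one_mulVec, smul_mulVec, ← mulVec_mulVec, ← mulVec_mulVec,
      ← mulVec_mulVec, sub_eq_zero] at hMz
  have hw : w ≠ 0 := fun h => hz <| by
    rw [← neg_eq_zero, ← hJJv z]
    change J *ᵥ w = 0
    rw [h, mulVec_zero]
  have hA₁w : A₁ *ᵥ w = -(J *ᵥ t) := by rw [hJJv, neg_neg]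
  have hwJ : star w ᵥ* J = (c : ℂ) • star (A₂ *ᵥ t) := by
    rw [← conjTranspose_conjTranspose J, ← star_mulVec, hJ, neg_mulVec, hJJv, neg_neg, hz_eq,
      star_smul, Complex.star_def, conj_ofReal]
  have key : star w ⬝ᵥ A₁ *ᵥ w = -((c : ℂ) * star (star t ⬝ᵥ A₂ *ᵥ t)) := by
    rw [hA₁w, dotProduct_neg, dotProduct_mulVec, hwJ, smul_dotProduct, ← star_dotProduct,
      smul_eq_mul]
  have key_re := congrArg re key
  simp only [neg_re, re_ofReal_mul, star_def, conj_re] at key_re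
  nlinarith [h₁ w hw, h₂ t]

lemma fromBlocks_zero_neg_one_one_zero_mul_self {n R : Type*} [Fintype n] [DecidableEq n]
    [Ring R] :
    (fromBlocks 0 (-1) 1 0 : Matrix (n ⊕ n) (n ⊕ n) R) * fromBlocks 0 (-1) 1 0 = -1 := by
  rw [fromBlocks_multiply, ← fromBlocks_one, fromBlocks_neg]
  simp

lemma conjTranspose_fromBlocks_zero_neg_one_one_zero {n R : Type*} [DecidableEq n]
    [Ring R] [StarRing R] :
    (fromBlocks 0 (-1) 1 0 : Matrix (n ⊕ n) (n ⊕ n) R)ᴴ = -fromBlocks 0 (-1) 1 0 := by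
  rw [fromBlocks_conjTranspose, fromBlocks_neg]
  simp

theorem D_invertible_general
    (n : ℕ)
    (A₁ A₂ : Matrix (Fin n ⊕ Fin n) (Fin n ⊕ Fin n) ℂ)
    (hA₁sym : A₁.transpose = A₁) (hA₂sym : A₂.transpose = A₂)
    (hA₁re : (A₁.map Complex.re).PosDef) (hA₂re : (A₂.map Complex.re).PosDef)
    (J : Matrix (Fin n ⊕ Fin n) (Fin n ⊕ Fin n) ℂ)
    (hJ : J = Matrix.fromBlocks 0 (-1) 1 0) :
    IsUnit (1 - (1 / 4 : ℂ) • (A₂ * J * A₁ * J)) := by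
  subst hJ
  have h_quarter : (1 / 4 : ℂ) = ((1 / 4 : ℝ) : ℂ) := by norm_num
  rw [h_quarter]
  exact isUnit_one_sub_smul_mul_of_re_pos conjTranspose_fromBlocks_zero_neg_one_one_zero
    fromBlocks_zero_neg_one_one_zero_mul_self
    (fun _ hz => re_star_dotProduct_mulVec_pos hA₁sym hA₁re hz)
    (re_star_dotProduct_mulVec_nonneg hA₂sym hA₂re.posSemidef) (by norm_num)

/-- for complex symmetric `2n × 2n` matrices `A₁, A₂` with positive
definite real parts, and `J = [[0, -I],[I, 0]]`, the matrix `D = I - ¼ A₂ J A₁ J`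
is invertible. -/
theorem D_invertible
    (n : ℕ) (hn : 1 ≤ n)
    (A₁ A₂ : Matrix (Fin n ⊕ Fin n) (Fin n ⊕ Fin n) ℂ)
    (hA₁sym : A₁.transpose = A₁) (hA₂sym : A₂.transpose = A₂)
    (hA₁re : (A₁.map Complex.re).PosDef) (hA₂re : (A₂.map Complex.re).PosDef)
    (J : Matrix (Fin n ⊕ Fin n) (Fin n ⊕ Fin n) ℂ)
    (hJ : J = Matrix.fromBlocks 0 (-1) 1 0) :
    IsUnit (1 - (1 / 4 : ℂ) • (A₂ * J * A₁ * J)) :=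
  D_invertible_general n A₁ A₂ hA₁sym hA₂sym hA₁re hA₂re J hJ
end
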